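/- Existence of weak* integrals: let V be a Banach space and g : Σ → V* such that for every v ∈ V the scalar function σ ↦ g(σ)(v) is measurable and ρ-integrable. Then g is Gel'fand–Pettis integrable in the weak* topology on V*, and the operator norm of ∫_Σ g dρ is at most the lower integral of σ ↦ ‖g(σ)‖_{V*}. -/

import Mathlib

/-!
By the closed graph theorem, `v ↦ [σ ↦ g σ v]` is a bounded operator `V → L¹(ρ)`: if `vₙ → v` and
the classes converge in `L¹`, a subsequence converges a.e., while `g σ vₙ → g σ v` for every `σ`.
Composing with the `L¹` integral gives the weak* integral; applying this to `ρ` restricted to `T`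
gives the integral over `T`. For the norm bound, `σ ↦ ‖g σ v‖ / ‖v‖` is an a.e.-measurable
minorant of `σ ↦ ‖g σ‖`, so `∫⁻ ‖g σ v‖ ≤ lowerIntegral * ‖v‖`.
-/

open MeasureTheory ENNReal
open scoped ENNReal NNReal

noncomputable section

/-- The lower integral of an arbitrary function. -/
def lowerIntegral {Ω : Type*} [MeasurableSpace Ω] (ρ : Measure Ω) (h : Ω → ℝ≥0∞) : ℝ≥0∞ :=
  ⨆ (g : Ω → ℝ≥0∞) (_ : Measurable g) (_ : ∀ᵐ ω ∂ρ, g ω ≤ h ω), ∫⁻ ω, g ω ∂ρ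

open Filter Topology

theorem MeasureTheory.Lp.ae_eq_of_tendsto_of_ae_tendsto {α E : Type*} [MeasurableSpace α]
    {μ : Measure α} [NormedAddCommGroup E] {p : ℝ≥0∞} [Fact (1 ≤ p)] {f : ℕ → Lp E p μ}
    {y : Lp E p μ} {F : ℕ → α → E} {h : α → E} (hfy : Tendsto f atTop (𝓝 y))
    (hfF : ∀ n, f n =ᵐ[μ] F n) (hFh : ∀ᵐ a ∂μ, Tendsto (fun n => F n a) atTop (𝓝 (h a))) :
    y =ᵐ[μ] h := by
  obtain ⟨ns, hns, hFy⟩ :=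
    ((tendstoInMeasure_of_tendsto_Lp hfy).congr_left hfF).exists_seq_tendsto_ae
  filter_upwards [hFy, hFh] with a hya hha
  exact tendsto_nhds_unique hya (hha.comp hns.tendsto_atTop)

theorem lintegral_le_lowerIntegral {Ω : Type*} [MeasurableSpace Ω] {ρ : Measure Ω}
    {f h : Ω → ℝ≥0∞} (hf : AEMeasurable f ρ) (hfh : f ≤ᵐ[ρ] h) :
    ∫⁻ ω, f ω ∂ρ ≤ lowerIntegral ρ h := by
  rw [lintegral_congr_ae hf.ae_eq_mk]
  exact le_iSup₂_of_le hf.mk hf.measurable_mk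
    (le_iSup_of_le (hf.ae_eq_mk.symm.trans_le hfh) le_rfl)

section WeakStarIntegral

variable {S : Type*} [MeasurableSpace S] {ρ : Measure S} {𝕜 : Type*} [RCLike 𝕜]
  {V : Type*} [NormedAddCommGroup V] [NormedSpace 𝕜 V]

def evalL1ₗ (g : S → StrongDual 𝕜 V) (hint : ∀ v, Integrable (fun σ => g σ v) ρ) :
    V →ₗ[𝕜] Lp 𝕜 1 ρ where
  toFun v := (hint v).toL1 _
  map_add' v w := by
    simp only [map_add]
    exact (hint v).toL1_add _ _ (hint w)
  map_smul' c v := by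
    simp only [map_smul, RingHom.id_apply]
    exact (hint v).toL1_smul _ c

variable {g : S → StrongDual 𝕜 V}

theorem evalL1ₗ_ae_eq (hint : ∀ v, Integrable (fun σ => g σ v) ρ) (v : V) :
    (evalL1ₗ g hint v : S → 𝕜) =ᵐ[ρ] fun σ => g σ v :=
  (hint v).coeFn_toL1

theorem continuous_evalL1ₗ [CompleteSpace V] (hint : ∀ v, Integrable (fun σ => g σ v) ρ) :
    Continuous (evalL1ₗ g hint) :=
  (evalL1ₗ g hint).continuous_of_seq_closed_graph fun u x _ hux huy => Lp.ext <|
    (Lp.ae_eq_of_tendsto_of_ae_tendsto huy (fun n => evalL1ₗ_ae_eq hint (u n))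
      (ae_of_all _ fun σ => ((g σ).continuous.tendsto x).comp hux)).trans
      (evalL1ₗ_ae_eq hint x).symm

def weakStarIntegral [CompleteSpace V] (g : S → StrongDual 𝕜 V)
    (hint : ∀ v, Integrable (fun σ => g σ v) ρ) : StrongDual 𝕜 V :=
  (L1.integralCLM' 𝕜).comp ⟨evalL1ₗ g hint, continuous_evalL1ₗ hint⟩

theorem weakStarIntegral_apply [CompleteSpace V] (hint : ∀ v, Integrable (fun σ => g σ v) ρ)
    (v : V) : weakStarIntegral g hint v = ∫ σ, g σ v ∂ρ := by
  rw [integral_eq _ (hint v), L1.integral_eq' 𝕜]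
  rfl

theorem lintegral_enorm_apply_le_lowerIntegral_mul {v : V}
    (hmeas : AEMeasurable (fun σ => g σ v) ρ) :
    ∫⁻ σ, ‖g σ v‖ₑ ∂ρ ≤ lowerIntegral ρ (fun σ => ‖g σ‖ₑ) * ‖v‖ₑ := by
  rcases eq_or_ne v 0 with rfl | hv
  · simp
  have hv₀ : ‖v‖ₑ ≠ 0 := enorm_ne_zero.2 hv
  rw [← ENNReal.div_le_iff hv₀ enorm_ne_top, div_eq_mul_inv,
    ← lintegral_mul_const' _ _ (ENNReal.inv_ne_top.2 hv₀)]
  refine lintegral_le_lowerIntegral (hmeas.enorm.mul_const _) (ae_of_all _ fun σ => ?_)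
  exact (div_eq_mul_inv _ _).symm.trans_le (ENNReal.div_le_of_le_mul ((g σ).le_opENorm v))

theorem enorm_le_lowerIntegral_of_apply_eq_integral
    (hmeas : ∀ v, AEMeasurable (fun σ => g σ v) ρ) {I : StrongDual 𝕜 V}
    (hI : ∀ v, I v = ∫ σ, g σ v ∂ρ) : ‖I‖ₑ ≤ lowerIntegral ρ (fun σ => ‖g σ‖ₑ) :=
  I.opENorm_le_bound fun v => hI v ▸ (enorm_integral_le_lintegral_enorm _).trans
    (lintegral_enorm_apply_le_lowerIntegral_mul (hmeas v))

end WeakStarIntegral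

theorem weakStarIntegral_exists_general
    {S : Type*} [MeasurableSpace S] (ρ : Measure S)
    {V : Type*} [NormedAddCommGroup V] [NormedSpace ℂ V] [CompleteSpace V]
    (g : S → StrongDual ℂ V)
    (hint : ∀ v : V, Integrable (fun σ => g σ v) ρ) :
    (∀ T : Set S, MeasurableSet T →
      ∃ I : StrongDual ℂ V, ∀ v : V, I v = ∫ σ in T, g σ v ∂ρ) ∧
    ∀ I : StrongDual ℂ V, (∀ v : V, I v = ∫ σ, g σ v ∂ρ) →
      (‖I‖₊ : ℝ≥0∞) ≤ lowerIntegral ρ (fun σ => (‖g σ‖₊ : ℝ≥0∞)) :=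
  ⟨fun _ _ => ⟨weakStarIntegral g fun v => (hint v).restrict, weakStarIntegral_apply _⟩,
    fun _ hI => enorm_le_lowerIntegral_of_apply_eq_integral (fun v => (hint v).aemeasurable) hI⟩

/-- existence of weak* integrals. If `V` is a Banach space and
`g : S → V*` is such that `σ ↦ g(σ)(v)` is measurable and integrable for each
`v ∈ V`, then `g` is Gel'fand–Pettis integrable in the weak* topology, i.e., over
every measurable set `T` there is `I_T ∈ V*` with `I_T(v) = ∫_T g(σ)(v) dρ`;
moreover the norm of the integral over all of `S` is bounded by the lower
integral of `σ ↦ ‖g(σ)‖`. -/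
theorem weakStarIntegral_exists
    {S : Type*} [MeasurableSpace S] (ρ : Measure S)
    {V : Type*} [NormedAddCommGroup V] [NormedSpace ℂ V] [CompleteSpace V]
    (g : S → StrongDual ℂ V)
    (hmeas : ∀ v : V, Measurable fun σ => g σ v)
    (hint : ∀ v : V, Integrable (fun σ => g σ v) ρ) :
    (∀ T : Set S, MeasurableSet T →
      ∃ I : StrongDual ℂ V, ∀ v : V, I v = ∫ σ in T, g σ v ∂ρ) ∧
    ∀ I : StrongDual ℂ V, (∀ v : V, I v = ∫ σ, g σ v ∂ρ) →
      (‖I‖₊ : ℝ≥0∞) ≤ lowerIntegral ρ (fun σ => (‖g σ‖₊ : ℝ≥0∞)) :=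
  weakStarIntegral_exists_general ρ g hint

end
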